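/- Young-type bound for perfect matching observables: Let d = 2m be even, n ≥ 1, I ⊆ {1,…,n}, C₀ ∈ ℝ, and let u_1, …, u_n : Ω → ℝ^n be random vectors on a probability space such that all the overlap monomials appearing below are integrable. Define the perfect matching observable f(η) := ℳ(η)^{−1}·𝔼[ Σ_{G∈𝒢_η} P(G) ] for each particle configuration η with d particles. Denote by η^{(1)} the configuration with d particles at site i and none elsewhere, by η^{(2)} the configuration with d particles at site j and none elsewhere, and by η the configuration with m particles at i, m particles at j and none elsewhere. Then there exist constants C₁, C₂, C > 0 depending only on d such that for any i < j: 𝔼[ p_{ij}^d ] ≤ C₁·f(η^{(1)}) + C₂·f(η^{(2)}) + C·f(η). -/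

import Mathlib

/-!
For the configuration with `d = 2m` particles at the single site `i`, every perfect matching
contributes `p_ii^d`, so `ℳ(η⁽¹⁾) f(η⁽¹⁾) ≥ 𝔼 p_ii^d`. For the configuration with `m` particles
at each of `i` and `j`, every matching contributes a monomial `p_ij^a p_ii^b p_jj^c` with
`a + b + c = d`. By a Young-type inequality each such monomial is at least
`-(ε p_ij^d + ε^{-d} (p_ii^d + p_jj^d))`, and the matching that pairs every particle at `i` with
one at `j` contributes exactly `p_ij^d`. There are at most `T = (2d)^{2d}` matchings, so with
`ε = 1 / 2T` the total error is at most `𝔼 p_ij^d / 2` plus multiples of `𝔼 p_ii^d` and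
`𝔼 p_jj^d`, which are controlled by the single-site observables.
-/

open MeasureTheory Finset

noncomputable section

attribute [local instance] Classical.propDecidable

/-- The vertex set `𝒱_η` of a particle configuration. -/
def VSet (n : ℕ) (η : Fin n → ℕ) : Type := Σ i : Fin n, Fin (2 * η i)

instance (n : ℕ) (η : Fin n → ℕ) : Fintype (VSet n η) := by
  unfold VSet; infer_instance

/-- A comparison on vertices, used to pick one representative per edge. -/
def vlt {n : ℕ} {η : Fin n → ℕ} (v w : VSet n η) : Prop :=
  v.1 < w.1 ∨ (v.1 = w.1 ∧ (v.2 : ℕ) < (w.2 : ℕ))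

/-- Perfect matchings of the complete graph on `𝒱_η`, as fixed-point-free
involutions. -/
def PMatching (n : ℕ) (η : Fin n → ℕ) : Type :=
  {σ : VSet n η → VSet n η // Function.Involutive σ ∧ ∀ v, σ v ≠ v}

noncomputable instance (n : ℕ) (η : Fin n → ℕ) : Fintype (PMatching n η) := by
  unfold PMatching; exact Fintype.ofFinite _

/-- `ℳ(η) = ∏_i (2η_i)!!`, `(2m)!! = ∏_{k ≤ 2m, k odd} k`. -/
def MM (n : ℕ) (η : Fin n → ℕ) : ℕ :=
  ∏ i : Fin n, ∏ k ∈ Finset.range (η i), (2 * k + 1)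

/-- The overlaps `p_{ij}` of the random vectors `u_1, …, u_n`. -/
def pR {Ω : Type} (n : ℕ) (u : Fin n → Ω → Fin n → ℝ) (I : Finset (Fin n))
    (C₀ : ℝ) (ω : Ω) (i j : Fin n) : ℝ :=
  (∑ α ∈ I, u i ω α * u j ω α) - if i = j then C₀ else 0

/-- `P(G)`, the product of overlaps over the edges of the matching `G`. -/
def PGr {Ω : Type} (n : ℕ) (u : Fin n → Ω → Fin n → ℝ) (I : Finset (Fin n))
    (C₀ : ℝ) {η : Fin n → ℕ} (G : PMatching n η) (ω : Ω) : ℝ :=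
  ∏ v ∈ Finset.univ.filter (fun v : VSet n η => vlt v (G.1 v)),
    pR n u I C₀ ω v.1 (G.1 v).1

/-- The perfect matching observable `f(η) = ℳ(η)⁻¹ 𝔼 ∑_{G ∈ 𝒢_η} P(G)`. -/
def fObs {Ω : Type} [MeasureSpace Ω] (n : ℕ) (u : Fin n → Ω → Fin n → ℝ)
    (I : Finset (Fin n)) (C₀ : ℝ) (η : Fin n → ℕ) : ℝ :=
  ((MM n η : ℕ) : ℝ)⁻¹ * ∫ ω, ∑ G : PMatching n η, PGr n u I C₀ G ω

section Matchings

variable {n : ℕ} {η : Fin n → ℕ}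

lemma VSet.ext_of_val {v w : VSet n η} (h₁ : v.1 = w.1) (h₂ : (v.2 : ℕ) = w.2) : v = w :=
  Sigma.ext h₁ ((Fin.heq_ext_iff (by rw [h₁])).2 h₂)

lemma vlt_asymm {v w : VSet n η} (h : vlt v w) : ¬ vlt w v := by
  simp only [vlt, Fin.lt_def, Fin.ext_iff] at *
  omega

lemma vlt_or_vlt_of_ne {v w : VSet n η} (h : v ≠ w) : vlt v w ∨ vlt w v := by
  simp only [vlt, Fin.lt_def, Fin.ext_iff]
  by_contra! h'
  exact h (VSet.ext_of_val (Fin.ext (by omega)) (by omega))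

lemma card_VSet : Fintype.card (VSet n η) = ∑ s, 2 * η s := by
  simp [VSet, Fintype.card_sigma]

instance : Nonempty (PMatching n η) :=
  ⟨⟨fun v => ⟨v.1, v.2.rev⟩, fun v => VSet.ext_of_val rfl (by simp), fun v h => by
    have hval := congrArg (fun w : VSet n η => (w.2 : ℕ)) h
    simp only [Fin.val_rev] at hval
    omega⟩⟩

lemma card_PMatching_le :
    Fintype.card (PMatching n η) ≤ Fintype.card (VSet n η) ^ Fintype.card (VSet n η) := by
  rw [← Fintype.card_fun]
  exact Fintype.card_le_of_injective _ Subtype.val_injective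

def PMatching.edgeReps (G : PMatching n η) : Finset (VSet n η) :=
  univ.filter fun v => vlt v (G.1 v)

lemma PMatching.two_mul_card_edgeReps (G : PMatching n η) :
    2 * G.edgeReps.card = Fintype.card (VSet n η) := by
  have hswap : G.edgeReps.card = (univ.filter fun v => ¬ vlt v (G.1 v)).card := by
    refine card_nbij' G.1 G.1 (fun v hv => ?_) (fun v hv => ?_)
      (fun v _ => G.2.1 v) (fun v _ => G.2.1 v)
    · simp only [PMatching.edgeReps, coe_filter, mem_univ, true_and, Set.mem_ofPred_eq] at hv ⊢
      rw [G.2.1 v]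
      exact vlt_asymm hv
    · simp only [PMatching.edgeReps, coe_filter, mem_univ, true_and, Set.mem_ofPred_eq] at hv ⊢
      rw [G.2.1 v]
      exact (vlt_or_vlt_of_ne (G.2.2 v)).resolve_right hv
  have hsplit := card_filter_add_card_filter_not (s := univ) fun v : VSet n η => vlt v (G.1 v)
  rw [card_univ] at hsplit
  unfold PMatching.edgeReps at hswap ⊢
  omega

lemma PMatching.exists_forall_fst_ne {τ : Fin n → Fin n} (hτ : Function.Involutive τ)
    (hη : ∀ s, η (τ s) = η s) (hfix : ∀ s, τ s = s → η s = 0) :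
    ∃ G : PMatching n η, ∀ v, (G.1 v).1 ≠ v.1 := by
  have hfst (v : VSet n η) : τ v.1 ≠ v.1 := fun h => by
    have := v.2.isLt
    have := hfix _ h
    omega
  refine ⟨⟨fun v => ⟨τ v.1, Fin.cast (by rw [hη]) v.2⟩, fun v => ?_, fun v h => ?_⟩, hfst⟩
  · exact VSet.ext_of_val (hτ v.1) rfl
  · exact hfst v (congrArg Sigma.fst h)

end Matchings

section Configurations

variable {n : ℕ} {η : Fin n → ℕ}

lemma MM_pos : 0 < MM n η :=
  prod_pos fun _ _ => prod_pos fun _ _ => by omega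

lemma MM_of_single {i : Fin n} {d : ℕ} (hηi : η i = d) (hη0 : ∀ s, s ≠ i → η s = 0) :
    MM n η = ∏ k ∈ range d, (2 * k + 1) := by
  rw [MM, prod_eq_single i (fun s _ hs => by simp [hη0 s hs]) (by simp), hηi]

lemma MM_of_pair {i j : Fin n} (hij : i ≠ j) {a b : ℕ} (hηi : η i = a) (hηj : η j = b)
    (hη0 : ∀ s, s ≠ i → s ≠ j → η s = 0) :
    MM n η = (∏ k ∈ range a, (2 * k + 1)) * ∏ k ∈ range b, (2 * k + 1) := by
  rw [MM, prod_eq_mul i j hij (fun s _ hs => by simp [hη0 s hs.1 hs.2]) (by simp) (by simp),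
    hηi, hηj]

lemma card_VSet_of_single {i : Fin n} {d : ℕ} (hηi : η i = d) (hη0 : ∀ s, s ≠ i → η s = 0) :
    Fintype.card (VSet n η) = 2 * d := by
  rw [card_VSet, sum_eq_single i (fun s _ hs => by simp [hη0 s hs]) (by simp), hηi]

lemma card_VSet_of_pair {i j : Fin n} (hij : i ≠ j) {a b : ℕ} (hηi : η i = a) (hηj : η j = b)
    (hη0 : ∀ s, s ≠ i → s ≠ j → η s = 0) :
    Fintype.card (VSet n η) = 2 * a + 2 * b := by
  rw [card_VSet, sum_eq_add i j hij (fun s _ hs => by simp [hη0 s hs.1 hs.2]) (by simp)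
    (by simp), hηi, hηj]

lemma VSet.fst_eq_or_eq {i j : Fin n} (hη0 : ∀ s, s ≠ i → s ≠ j → η s = 0) (v : VSet n η) :
    v.1 = i ∨ v.1 = j := by
  by_contra! h
  have := v.2.isLt
  have := hη0 _ h.1 h.2
  omega

end Configurations

section Overlaps

variable {Ω : Type} {n : ℕ} (u : Fin n → Ω → Fin n → ℝ) (I : Finset (Fin n)) (C₀ : ℝ)
  {η : Fin n → ℕ}

lemma pR_comm (ω : Ω) (a b : Fin n) : pR n u I C₀ ω a b = pR n u I C₀ ω b a := by
  simp only [pR, mul_comm (u a ω _), eq_comm (a := a)]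

lemma PGr_eq_prod (G : PMatching n η) (ω : Ω) :
    PGr n u I C₀ G ω = ∏ v ∈ G.edgeReps, pR n u I C₀ ω v.1 (G.1 v).1 :=
  rfl

lemma pR_eq_ite {i j s t : Fin n} (hs : s = i ∨ s = j) (ht : t = i ∨ t = j) (ω : Ω) :
    pR n u I C₀ ω s t = if t = s then (if s = i then pR n u I C₀ ω i i else pR n u I C₀ ω j j)
      else pR n u I C₀ ω i j := by
  rcases hs with rfl | rfl <;> rcases ht with rfl | rfl <;> split_ifs <;> subst_vars <;>
    first | rfl | exact pR_comm u I C₀ ω _ _ | exact absurd rfl ‹_›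

lemma PGr_eq_monomial {i j : Fin n} (hη0 : ∀ s, s ≠ i → s ≠ j → η s = 0)
    (G : PMatching n η) :
    ∃ a b c : ℕ, a + b + c = G.edgeReps.card ∧ PGr n u I C₀ G = fun ω =>
      pR n u I C₀ ω i j ^ a * pR n u I C₀ ω i i ^ b * pR n u I C₀ ω j j ^ c := by
  set D := G.edgeReps.filter fun v => (G.1 v).1 = v.1
  refine ⟨(G.edgeReps.filter fun v => ¬ (G.1 v).1 = v.1).card,
    (D.filter fun v => v.1 = i).card, (D.filter fun v => ¬ v.1 = i).card, ?_, funext fun ω => ?_⟩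
  · rw [add_assoc, card_filter_add_card_filter_not, add_comm, card_filter_add_card_filter_not]
  rw [PGr_eq_prod, prod_congr rfl fun v _ => pR_eq_ite u I C₀ (VSet.fst_eq_or_eq hη0 v)
    (VSet.fst_eq_or_eq hη0 (G.1 v)) ω, prod_ite, prod_ite, prod_const, prod_const, prod_const]
  ring

lemma PGr_eq_pow_of_single {i : Fin n} (hη0 : ∀ s, s ≠ i → η s = 0) (G : PMatching n η) :
    PGr n u I C₀ G = fun ω => pR n u I C₀ ω i i ^ G.edgeReps.card := by
  obtain ⟨a, b, c, habc, hG⟩ := PGr_eq_monomial u I C₀ (j := i) (fun s hs _ => hη0 s hs) G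
  simp only [hG, ← pow_add, habc]

lemma PGr_eq_pow_of_forall_fst_ne {i j : Fin n} (hη0 : ∀ s, s ≠ i → s ≠ j → η s = 0)
    (G : PMatching n η) (hG : ∀ v, (G.1 v).1 ≠ v.1) :
    PGr n u I C₀ G = fun ω => pR n u I C₀ ω i j ^ G.edgeReps.card := by
  funext ω
  rw [PGr_eq_prod, ← prod_const]
  refine prod_congr rfl fun v _ => ?_
  rw [pR_eq_ite u I C₀ (VSet.fst_eq_or_eq hη0 v) (VSet.fst_eq_or_eq hη0 (G.1 v)), if_neg (hG v)]

end Overlaps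

lemma pow_mul_pow_le_young {z M ε : ℝ} (hz : 0 ≤ z) (hM : 0 ≤ M) (hε : 0 < ε) (hε1 : ε ≤ 1)
    {c k : ℕ} (hk : k ≠ 0) :
    z ^ c * M ^ k ≤ ε * z ^ (c + k) + ε⁻¹ ^ (c + k) * M ^ (c + k) := by
  rcases le_or_gt M (ε * z) with h | h
  · have hsmall : z ^ c * M ^ k ≤ ε * z ^ (c + k) :=
      calc z ^ c * M ^ k ≤ z ^ c * (ε * z) ^ k := by gcongr
        _ = ε ^ k * z ^ (c + k) := by ring
        _ ≤ ε * z ^ (c + k) := by gcongr; exact pow_le_of_le_one hε.le hε1 hk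
    have : 0 ≤ ε⁻¹ ^ (c + k) * M ^ (c + k) := by positivity
    linarith
  · have hzM : z ≤ ε⁻¹ * M := by rw [inv_mul_eq_div, le_div_iff₀ hε]; linarith
    have hlarge : z ^ c * M ^ k ≤ ε⁻¹ ^ (c + k) * M ^ (c + k) :=
      calc z ^ c * M ^ k ≤ (ε⁻¹ * M) ^ c * M ^ k := by gcongr
        _ = ε⁻¹ ^ c * M ^ (c + k) := by ring
        _ ≤ ε⁻¹ ^ (c + k) * M ^ (c + k) := by
          gcongr
          · exact (one_le_inv₀ hε).2 hε1
          · omega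
    have : 0 ≤ ε * z ^ (c + k) := by positivity
    linarith

lemma neg_le_monomial {x y z ε : ℝ} (hε : 0 < ε) (hε1 : ε ≤ 1) {a b c m : ℕ}
    (habc : a + b + c = 2 * m) :
    -(ε * z ^ (2 * m) + ε⁻¹ ^ (2 * m) * (x ^ (2 * m) + y ^ (2 * m))) ≤ z ^ a * x ^ b * y ^ c := by
  have hev : Even (2 * m) := even_two_mul m
  rcases Nat.eq_zero_or_pos (b + c) with hbc | hbc
  · obtain ⟨rfl, rfl, rfl⟩ : a = 2 * m ∧ b = 0 ∧ c = 0 := by omega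
    have := hev.pow_nonneg x
    have := hev.pow_nonneg y
    have := hev.pow_nonneg z
    have : 0 ≤ ε * z ^ (2 * m) + ε⁻¹ ^ (2 * m) * (x ^ (2 * m) + y ^ (2 * m)) := by positivity
    simp only [pow_zero, mul_one]
    linarith
  have hM : max |x| |y| ^ (2 * m) ≤ x ^ (2 * m) + y ^ (2 * m) := by
    rcases max_choice |x| |y| with h | h <;> rw [h, hev.pow_abs] <;>
      linarith [hev.pow_nonneg x, hev.pow_nonneg y]
  set M := max |x| |y|
  have hsum : a + (b + c) = 2 * m := by omega
  calc -(ε * z ^ (2 * m) + ε⁻¹ ^ (2 * m) * (x ^ (2 * m) + y ^ (2 * m)))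
      ≤ -(ε * |z| ^ (a + (b + c)) + ε⁻¹ ^ (a + (b + c)) * M ^ (a + (b + c))) := by
        rw [hsum, hev.pow_abs]; gcongr
    _ ≤ -(|z| ^ a * M ^ (b + c)) :=
        neg_le_neg (pow_mul_pow_le_young (abs_nonneg z) (by positivity) hε hε1 hbc.ne')
    _ ≤ -|z ^ a * x ^ b * y ^ c| := by
        rw [abs_mul, abs_mul, abs_pow, abs_pow, abs_pow, pow_add, mul_assoc]
        gcongr
        exacts [le_max_left _ _, le_max_right _ _]
    _ ≤ z ^ a * x ^ b * y ^ c := neg_abs_le _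

section Observables

variable {Ω : Type} [MeasureSpace Ω] {n : ℕ} (u : Fin n → Ω → Fin n → ℝ) (I : Finset (Fin n))
  (C₀ : ℝ) {η : Fin n → ℕ}

lemma MM_mul_fObs (hint : ∀ G : PMatching n η, Integrable (PGr n u I C₀ G)) :
    (MM n η : ℝ) * fObs n u I C₀ η = ∑ G : PMatching n η, ∫ ω, PGr n u I C₀ G ω := by
  rw [fObs, ← mul_assoc, mul_inv_cancel₀ (by exact_mod_cast MM_pos.ne'), one_mul,
    integral_finsetSum _ fun G _ => hint G]

lemma integral_pow_le_MM_mul_fObs_of_single {i : Fin n} {m : ℕ} (hηi : η i = 2 * m)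
    (hη0 : ∀ s, s ≠ i → η s = 0) (hint : Integrable fun ω => pR n u I C₀ ω i i ^ (2 * m)) :
    ∫ ω, pR n u I C₀ ω i i ^ (2 * m) ≤
      (∏ k ∈ range (2 * m), (2 * k + 1) : ℕ) * fObs n u I C₀ η := by
  rw [← MM_of_single hηi hη0]
  have hG (G : PMatching n η) : PGr n u I C₀ G = fun ω => pR n u I C₀ ω i i ^ (2 * m) := by
    have := G.two_mul_card_edgeReps
    rw [card_VSet_of_single hηi hη0] at this
    rw [PGr_eq_pow_of_single u I C₀ hη0, show G.edgeReps.card = 2 * m by omega]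
  rw [MM_mul_fObs u I C₀ fun G => hG G ▸ hint]
  simp only [hG, sum_const, card_univ, nsmul_eq_mul]
  exact le_mul_of_one_le_left (integral_nonneg fun ω => (even_two_mul m).pow_nonneg _)
    (by exact_mod_cast Fintype.card_pos)

lemma sub_le_MM_mul_fObs_of_pair {i j : Fin n} (hij : i ≠ j) {m : ℕ} (hηi : η i = m)
    (hηj : η j = m) (hη0 : ∀ s, s ≠ i → s ≠ j → η s = 0)
    (hint : ∀ a b c : ℕ, a + b + c = 2 * m → Integrable fun ω =>
      pR n u I C₀ ω i j ^ a * pR n u I C₀ ω i i ^ b * pR n u I C₀ ω j j ^ c)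
    {ε : ℝ} (hε : 0 < ε) (hε1 : ε ≤ 1) :
    (∫ ω, pR n u I C₀ ω i j ^ (2 * m)) - (4 * m : ℝ) ^ (4 * m) *
      (ε * (∫ ω, pR n u I C₀ ω i j ^ (2 * m)) + ε⁻¹ ^ (2 * m) *
        ((∫ ω, pR n u I C₀ ω i i ^ (2 * m)) + ∫ ω, pR n u I C₀ ω j j ^ (2 * m)))
      ≤ ((∏ k ∈ range m, (2 * k + 1)) * ∏ k ∈ range m, (2 * k + 1) : ℕ) * fObs n u I C₀ η := by
  rw [← MM_of_pair hij hηi hηj hη0]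
  set z := fun ω => pR n u I C₀ ω i j ^ (2 * m)
  set x := fun ω => pR n u I C₀ ω i i ^ (2 * m)
  set y := fun ω => pR n u I C₀ ω j j ^ (2 * m)
  have hz : Integrable z := by simpa using hint (2 * m) 0 0 (by ring)
  have hx : Integrable x := by simpa using hint 0 (2 * m) 0 (by ring)
  have hy : Integrable y := by simpa using hint 0 0 (2 * m) (by ring)
  set Q := ε * (∫ ω, z ω) + ε⁻¹ ^ (2 * m) * ((∫ ω, x ω) + ∫ ω, y ω)
  have hQ : 0 ≤ Q := by
    have hev := even_two_mul m
    have : 0 ≤ ∫ ω, z ω := integral_nonneg fun ω => hev.pow_nonneg _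
    have : 0 ≤ ∫ ω, x ω := integral_nonneg fun ω => hev.pow_nonneg _
    have : 0 ≤ ∫ ω, y ω := integral_nonneg fun ω => hev.pow_nonneg _
    positivity
  have hcard (G : PMatching n η) : G.edgeReps.card = 2 * m := by
    have := G.two_mul_card_edgeReps
    rw [card_VSet_of_pair hij hηi hηj hη0] at this
    omega
  have hintG (G : PMatching n η) : Integrable (PGr n u I C₀ G) := by
    obtain ⟨a, b, c, habc, hG⟩ := PGr_eq_monomial u I C₀ hη0 G
    exact hG ▸ hint a b c (habc.trans (hcard G))
  have hlower (G : PMatching n η) : -Q ≤ ∫ ω, PGr n u I C₀ G ω := by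
    obtain ⟨a, b, c, habc, hG⟩ := PGr_eq_monomial u I C₀ hη0 G
    have hQ_eq : -Q = ∫ ω, -(ε * z ω + ε⁻¹ ^ (2 * m) * (x ω + y ω)) := by
      rw [integral_neg, integral_add, integral_const_mul, integral_const_mul, integral_add hx hy]
      exacts [hz.const_mul _, (hx.add hy).const_mul _]
    rw [hQ_eq]
    refine integral_mono ((hz.const_mul _).add ((hx.add hy).const_mul _)).neg (hintG G)
      fun ω => ?_
    rw [hG]
    exact neg_le_monomial hε hε1 (habc.trans (hcard G))
  obtain ⟨G₀, hG₀⟩ := PMatching.exists_forall_fst_ne (η := η) (Equiv.swap_apply_self i j)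
    (fun s => by rw [Equiv.swap_apply_def]; split_ifs <;> simp_all)
    (fun s hs => hη0 s (fun h => by simp [h] at hs; exact hij hs.symm)
      (fun h => by simp [h] at hs; exact hij hs))
  have hA : ∫ ω, PGr n u I C₀ G₀ ω = ∫ ω, z ω := by
    rw [PGr_eq_pow_of_forall_fst_ne u I C₀ hη0 G₀ hG₀, hcard]
  have hsum : (∫ ω, z ω) + Q ≤ ∑ G : PMatching n η, ((∫ ω, PGr n u I C₀ G ω) + Q) := by
    rw [← hA]
    exact single_le_sum (f := fun G => (∫ ω, PGr n u I C₀ G ω) + Q)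
      (fun G _ => by linarith [hlower G]) (mem_univ G₀)
  rw [sum_add_distrib, sum_const, card_univ, nsmul_eq_mul] at hsum
  have hcardT : (Fintype.card (PMatching n η) : ℝ) ≤ (4 * m : ℝ) ^ (4 * m) := by
    have h := card_PMatching_le (η := η)
    rw [card_VSet_of_pair hij hηi hηj hη0, ← two_mul, ← mul_assoc] at h
    exact_mod_cast h
  rw [MM_mul_fObs u I C₀ hintG]
  linarith [mul_le_mul_of_nonneg_right hcardT hQ]

end Observables

theorem young_bound_perfect_matching_observables_general
    (m : ℕ) :
    ∃ C₁ > (0:ℝ), ∃ C₂ > (0:ℝ), ∃ C > (0:ℝ),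
    ∀ (n : ℕ) (Ω : Type) (mΩ : MeasureSpace Ω),
      IsProbabilityMeasure (volume : Measure Ω) →
    ∀ (u : Fin n → Ω → Fin n → ℝ) (I : Finset (Fin n)) (C₀ : ℝ) (i j : Fin n),
      i < j →
      (∀ a b c : ℕ, a + b + c ≤ 2 * m →
        Integrable (fun ω => pR n u I C₀ ω i j ^ a * pR n u I C₀ ω i i ^ b *
          pR n u I C₀ ω j j ^ c)) →
      (∫ ω, pR n u I C₀ ω i j ^ (2 * m)) ≤
        C₁ * fObs n u I C₀ (fun s => if s = i then 2 * m else 0)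
        + C₂ * fObs n u I C₀ (fun s => if s = j then 2 * m else 0)
        + C * fObs n u I C₀ (fun s => if s = i then m else if s = j then m else 0) := by
  set T : ℝ := (4 * m : ℝ) ^ (4 * m)
  have hT : 1 ≤ T := by
    rcases m.eq_zero_or_pos with rfl | hm
    · simp [T]
    · exact one_le_pow₀ (by norm_cast; omega)
  set ε : ℝ := (2 * T)⁻¹ with hεdef
  set D₁ : ℝ := ((∏ k ∈ range (2 * m), (2 * k + 1) : ℕ) : ℝ)
  set D₂ : ℝ := (((∏ k ∈ range m, (2 * k + 1)) * ∏ k ∈ range m, (2 * k + 1) : ℕ) : ℝ)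
  have hε : 0 < ε := by positivity
  have hε1 : ε ≤ 1 := inv_le_one_of_one_le₀ (by linarith)
  refine ⟨2 * T * ε⁻¹ ^ (2 * m) * D₁, by positivity, 2 * T * ε⁻¹ ^ (2 * m) * D₁, by positivity,
    2 * D₂, by positivity, ?_⟩
  intro n Ω mΩ _ u I C₀ i j hij hint
  have hint' (a b c : ℕ) (h : a + b + c = 2 * m) := hint a b c h.le
  have hB := integral_pow_le_MM_mul_fObs_of_single u I C₀ (i := i) (m := m)
    (η := fun s => if s = i then 2 * m else 0) (by simp) (fun s hs => by simp [hs])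
    (by simpa using hint' 0 (2 * m) 0 (by ring))
  have hB' := integral_pow_le_MM_mul_fObs_of_single u I C₀ (i := j) (m := m)
    (η := fun s => if s = j then 2 * m else 0) (by simp) (fun s hs => by simp [hs])
    (by simpa using hint' 0 0 (2 * m) (by ring))
  have hA := sub_le_MM_mul_fObs_of_pair u I C₀ hij.ne
    (η := fun s => if s = i then m else if s = j then m else 0) (by simp)
    (by simp [hij.ne']) (fun s hi hj => by simp [hi, hj]) hint' hε hε1
  have hTε : T * ε = 1 / 2 := by
    have : T ≠ 0 := (zero_lt_one.trans_le hT).ne'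
    rw [hεdef]
    field_simp
  have hTK := mul_nonneg (zero_le_one.trans hT) (pow_nonneg (inv_nonneg.2 hε.le) (2 * m))
  calc (∫ ω, pR n u I C₀ ω i j ^ (2 * m))
      = 2 * ((∫ ω, pR n u I C₀ ω i j ^ (2 * m)) - T * ε * ∫ ω, pR n u I C₀ ω i j ^ (2 * m)) := by
        rw [hTε]; ring
    _ ≤ _ := by linarith [mul_le_mul_of_nonneg_left hB hTK, mul_le_mul_of_nonneg_left hB' hTK]

/-- **Lemma 3.3 (Young-type bound for perfect matching observables).**
With `d = 2m`, `η⁽¹⁾` (resp. `η⁽²⁾`) the configuration with `d` particles at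
site `i` (resp. `j`) and `η` the configuration with `m` particles at each of
`i` and `j`, there are constants `C₁, C₂, C > 0`, depending only on `d`,
such that `𝔼 p_{ij}^d ≤ C₁ f(η⁽¹⁾) + C₂ f(η⁽²⁾) + C f(η)`. -/
theorem young_bound_perfect_matching_observables
    (m : ℕ) (hm : 1 ≤ m) :
    ∃ C₁ > (0:ℝ), ∃ C₂ > (0:ℝ), ∃ C > (0:ℝ),
    ∀ (n : ℕ) (Ω : Type) (mΩ : MeasureSpace Ω),
      IsProbabilityMeasure (volume : Measure Ω) →
    ∀ (u : Fin n → Ω → Fin n → ℝ) (I : Finset (Fin n)) (C₀ : ℝ) (i j : Fin n),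
      i < j →
      (∀ a b c : ℕ, a + b + c ≤ 2 * m →
        Integrable (fun ω => pR n u I C₀ ω i j ^ a * pR n u I C₀ ω i i ^ b *
          pR n u I C₀ ω j j ^ c)) →
      (∫ ω, pR n u I C₀ ω i j ^ (2 * m)) ≤
        C₁ * fObs n u I C₀ (fun s => if s = i then 2 * m else 0)
        + C₂ * fObs n u I C₀ (fun s => if s = j then 2 * m else 0)
        + C * fObs n u I C₀ (fun s => if s = i then m else if s = j then m else 0) :=
  young_bound_perfect_matching_observables_general m
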